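/- Let H_A, H_B be finite-dimensional complex Hilbert spaces and let ψ, φ be unit vectors in H_A ⊗ H_B. Then the maximum of |⟨φ, (U ⊗ 1_B) ψ⟩| over all unitaries U on H_A equals tr|X|, where X = tr_B |ψ⟩⟨φ| is an operator on H_A. -/

import Mathlib

open Matrix
open scoped ComplexOrder Kronecker

noncomputable section

/-- `tr |X|` where `|X| = √(X Xᴴ)`; this equals the sum of the singular values of `X`. -/
def traceAbs {m : Type*} [Fintype m] [DecidableEq m] (X : Matrix m m ℂ) : ℝ :=
  (((Matrix.posSemidef_self_mul_conjTranspose X).isHermitian.eigenvectorUnitary.1 *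
      diagonal (fun i : m => ((√((Matrix.posSemidef_self_mul_conjTranspose X).isHermitian.eigenvalues i) : ℝ) : ℂ)) *
      (star (Matrix.posSemidef_self_mul_conjTranspose X).isHermitian.eigenvectorUnitary :
        Matrix m m ℂ)).trace).re

/-- The partial trace over `H_B` of the rank-one operator `|ψ⟩⟨φ|`, an operator on `H_A`:
`X a a' = Σ_b ψ (a,b) · conj (φ (a',b))`. -/
def ptraceKetBra {dA dB : ℕ} (ψ φ : Fin dA × Fin dB → ℂ) :
    Matrix (Fin dA) (Fin dA) ℂ :=
  Matrix.of fun a a' => ∑ b, ψ (a, b) * star (φ (a', b))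

/-- The overlap `⟨φ, (U ⊗ 1) ψ⟩` equals `tr (U · tr_B |ψ⟩⟨φ|)`. -/
lemma inner_eq_trace {dA dB : ℕ} (U : Matrix (Fin dA) (Fin dA) ℂ)
    (ψ φ : Fin dA × Fin dB → ℂ) :
    star φ ⬝ᵥ ((U ⊗ₖ (1 : Matrix (Fin dB) (Fin dB) ℂ)).mulVec ψ)
      = (U * ptraceKetBra ψ φ).trace := by
  simp only [dotProduct, mulVec, trace, diag, mul_apply, ptraceKetBra, of_apply,
    kroneckerMap_apply, one_apply, Fintype.sum_prod_type, Pi.star_apply,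
    mul_ite, ite_mul, mul_one, mul_zero, zero_mul, one_mul,
    Finset.sum_ite_eq, Finset.sum_ite_eq', Finset.mem_univ, if_true,
    Finset.mul_sum, Finset.sum_mul]
  refine Finset.sum_congr rfl fun a _ => ?_
  rw [Finset.sum_comm]
  refine Finset.sum_congr rfl fun c _ => Finset.sum_congr rfl fun b _ => ?_
  ring

/-- For any square complex matrix `X`, the maximum of `|tr (U X)|` over unitaries `U`
is `tr |X|`. -/
lemma isGreatest_traceAbs {n : ℕ} (X : Matrix (Fin n) (Fin n) ℂ) :
    IsGreatest {r : ℝ | ∃ U ∈ Matrix.unitaryGroup (Fin n) ℂ,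
      r = ‖(U * X).trace‖} (traceAbs X) := by
  have hP : (X * Xᴴ).PosSemidef := Matrix.posSemidef_self_mul_conjTranspose X
  have hH : (X * Xᴴ).IsHermitian := hP.1
  set V : Matrix (Fin n) (Fin n) ℂ := (hH.eigenvectorUnitary : Matrix (Fin n) (Fin n) ℂ) with hVdef
  set d : Fin n → ℝ := hH.eigenvalues with hddef
  have hd0 : ∀ i, 0 ≤ d i := hP.eigenvalues_nonneg
  have hVmem : V ∈ Matrix.unitaryGroup (Fin n) ℂ := hH.eigenvectorUnitary.2
  have hVV : star V * V = 1 := (Matrix.mem_unitaryGroup_iff').mp hVmem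
  have hVV' : V * star V = 1 := (Matrix.mem_unitaryGroup_iff).mp hVmem
  set B : Matrix (Fin n) (Fin n) ℂ := star V * X with hBdef
  have hXVB : X = V * B := by
    rw [hBdef, ← Matrix.mul_assoc, hVV', Matrix.one_mul]
  have hBB : B * Bᴴ = Matrix.diagonal (fun i => (d i : ℂ)) := by
    have hsp : star V * (X * Xᴴ) * V = diagonal (RCLike.ofReal ∘ hH.eigenvalues) := by
      have := hH.conjStarAlgAut_star_eigenvectorUnitary
      rwa [Unitary.conjStarAlgAut_star_apply] at this
    calc B * Bᴴ = star V * (X * Xᴴ) * V := by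
          simp only [hBdef, conjTranspose_mul, Matrix.star_eq_conjTranspose,
            conjTranspose_conjTranspose, Matrix.mul_assoc]
      _ = Matrix.diagonal (fun i => (d i : ℂ)) := by
          rw [hsp]; rfl
  -- row identities
  have hrow : ∀ i, ∑ j, B i j * star (B i j) = (d i : ℂ) := by
    intro i
    have := congrFun (congrFun hBB i) i
    simpa [Matrix.mul_apply, Matrix.conjTranspose_apply, Matrix.diagonal] using this
  have hrowR : ∀ i, ∑ j, ‖B i j‖ ^ 2 = d i := by
    intro i
    have h := hrow i
    have : ((∑ j, ‖B i j‖ ^ 2 : ℝ) : ℂ) = ((d i : ℝ) : ℂ) := by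
      rw [← h]; push_cast
      refine Finset.sum_congr rfl fun j _ => ?_
      rw [show star (B i j) = (starRingEnd ℂ) (B i j) from rfl, Complex.mul_conj,
        Complex.normSq_eq_norm_sq]
      push_cast
      ring
    exact_mod_cast this
  -- value of traceAbs
  have htraceAbs : traceAbs X = ∑ i, Real.sqrt (d i) := by
    have h1 : (V * Matrix.diagonal (fun i => ((Real.sqrt (d i) : ℝ) : ℂ)) * star V).trace = ((∑ i, Real.sqrt (d i) : ℝ) : ℂ) := by
      rw [Matrix.trace_mul_cycle, hVV, Matrix.one_mul, Matrix.trace_diagonal]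
      push_cast
      rfl
    show ((V * Matrix.diagonal (fun i => ((Real.sqrt (d i) : ℝ) : ℂ)) * star V).trace).re = _
    rw [h1, Complex.ofReal_re]
  -- Cauchy-Schwarz bound per row
  have habs_row : ∀ (M : Matrix (Fin n) (Fin n) ℂ), M ∈ Matrix.unitaryGroup (Fin n) ℂ →
      ∀ i, ‖∑ j, B i j * M j i‖ ≤ Real.sqrt (d i) := by
    intro M hM i
    set x : EuclideanSpace ℂ (Fin n) := WithLp.toLp 2 (fun j => star (B i j)) with hx
    set y : EuclideanSpace ℂ (Fin n) := WithLp.toLp 2 (fun j => M j i) with hy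
    have hinner : (inner ℂ x y : ℂ) = ∑ j, B i j * M j i := by
      simp only [PiLp.inner_apply, RCLike.inner_apply, hx, hy]
      exact Finset.sum_congr rfl fun j _ => by simp [mul_comm]
    have hxnorm : ‖x‖ = Real.sqrt (d i) := by
      rw [EuclideanSpace.norm_eq]
      congr 1
      rw [← hrowR i]
      exact Finset.sum_congr rfl fun j _ => by simp [hx]
    have hyn2 : ∑ j, ‖M j i‖ ^ 2 = 1 := by
      have hM' : star M * M = 1 := (Matrix.mem_unitaryGroup_iff').mp hM
      have h := congrFun (congrFun hM' i) i
      simp only [Matrix.mul_apply, Matrix.star_apply, Matrix.one_apply_eq] at h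
      have : ((∑ j, ‖M j i‖ ^ 2 : ℝ) : ℂ) = 1 := by
        rw [← h]; push_cast
        refine Finset.sum_congr rfl fun j _ => ?_
        rw [show star (M j i) = (starRingEnd ℂ) (M j i) from rfl, mul_comm, Complex.mul_conj,
          Complex.normSq_eq_norm_sq]
        push_cast
        ring
      exact_mod_cast this
    have hynorm : ‖y‖ = 1 := by
      rw [EuclideanSpace.norm_eq]
      simp only [hy]
      rw [hyn2, Real.sqrt_one]
    calc ‖∑ j, B i j * M j i‖ = ‖(inner ℂ x y : ℂ)‖ := by
          rw [hinner]
      _ ≤ ‖x‖ * ‖y‖ := norm_inner_le_norm x y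
      _ = Real.sqrt (d i) := by rw [hxnorm, hynorm, mul_one]
  have htr : ∀ (M : Matrix (Fin n) (Fin n) ℂ), (B * M).trace = ∑ i, ∑ j, B i j * M j i := by
    intro M
    simp [Matrix.trace, Matrix.diag, Matrix.mul_apply]
  constructor
  · -- membership: construct the optimal unitary
    have hBzero : ∀ i, d i = 0 → ∀ j, B i j = 0 := by
      intro i hi j
      have h := hrowR i
      rw [hi] at h
      have hj := (Finset.sum_eq_zero_iff_of_nonneg
        (fun j _ => sq_nonneg ‖B i j‖)).mp h j (Finset.mem_univ j)
      simpa [pow_eq_zero_iff] using hj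
    set s : Set (Fin n) := {i | d i ≠ 0} with hsdef
    set v : Fin n → EuclideanSpace ℂ (Fin n) :=
      fun i => WithLp.toLp 2 (fun j => (((Real.sqrt (d i))⁻¹ : ℝ) : ℂ) * star (B i j)) with hvdef
    have hBB' : ∀ i i', ∑ j, B i j * star (B i' j) = if i = i' then (d i : ℂ) else 0 := by
      intro i i'
      have := congrFun (congrFun hBB i) i'
      simpa [Matrix.mul_apply, Matrix.conjTranspose_apply, Matrix.diagonal] using this
    have hvon : Orthonormal ℂ (s.restrict v) := by
      rw [orthonormal_iff_ite]
      rintro ⟨i, hi⟩ ⟨i', hi'⟩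
      have hinner : (inner ℂ (v i) (v i') : ℂ)
          = (((Real.sqrt (d i))⁻¹ : ℝ) : ℂ) * (((Real.sqrt (d i'))⁻¹ : ℝ) : ℂ)
            * ∑ j, B i j * star (B i' j) := by
        simp only [PiLp.inner_apply, RCLike.inner_apply, hvdef, Finset.mul_sum]
        refine Finset.sum_congr rfl fun j _ => ?_
        have h1 : (starRingEnd ℂ) ((((Real.sqrt (d i))⁻¹ : ℝ) : ℂ) * star (B i j))
            = (((Real.sqrt (d i))⁻¹ : ℝ) : ℂ) * B i j := by
          rw [map_mul (starRingEnd ℂ), Complex.conj_ofReal]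
          simp
        rw [h1]
        ring
      show (inner ℂ (v i) (v i') : ℂ) = _
      rw [hinner, hBB']
      by_cases hii : i = i'
      · subst hii
        simp only [Subtype.mk.injEq, eq_self_iff_true, if_true]
        have hd : d i ≠ 0 := hi
        have hsd : Real.sqrt (d i) ≠ 0 := by
          simpa [Real.sqrt_eq_zero (hd0 i)] using hd
        have : ((Real.sqrt (d i))⁻¹ : ℝ) * ((Real.sqrt (d i))⁻¹ : ℝ) * d i = 1 := by
          field_simp
          rw [Real.sq_sqrt (hd0 i)]
        have h2 : ((((Real.sqrt (d i))⁻¹ * (Real.sqrt (d i))⁻¹ * d i : ℝ)) : ℂ) = 1 := by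
          rw [this]; norm_num
        push_cast at h2 ⊢
        linear_combination h2
      · simp [hii, Subtype.mk.injEq]
    obtain ⟨b, hb⟩ := hvon.exists_orthonormalBasis_extension_of_card_eq
      (by simp [finrank_euclideanSpace])
    set M₀ : Matrix (Fin n) (Fin n) ℂ := Matrix.of fun j i => b i j with hM₀def
    have hM₀mem : M₀ ∈ Matrix.unitaryGroup (Fin n) ℂ := by
      rw [Matrix.mem_unitaryGroup_iff']
      ext i i'
      have hob := (orthonormal_iff_ite.mp b.orthonormal) i i'
      simp only [PiLp.inner_apply, RCLike.inner_apply] at hob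
      simp only [Matrix.mul_apply, Matrix.star_apply, hM₀def, Matrix.of_apply,
        Matrix.one_apply]
      rw [← hob]
      exact Finset.sum_congr rfl fun j _ => mul_comm _ _
    refine ⟨M₀ * star V, mul_mem hM₀mem (Unitary.star_mem hVmem), ?_⟩
    have htr0 : (M₀ * star V * X).trace = ((∑ i, Real.sqrt (d i) : ℝ) : ℂ) := by
      rw [hXVB, show M₀ * star V * (V * B) = M₀ * (star V * V) * B by
        simp only [Matrix.mul_assoc], hVV, Matrix.mul_one, Matrix.trace_mul_comm, htr]
      rw [Complex.ofReal_sum]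
      refine Finset.sum_congr rfl fun i _ => ?_
      by_cases hi : d i = 0
      · simp [hBzero i hi, hi]
      · have hbv : ∀ j, M₀ j i = (((Real.sqrt (d i))⁻¹ : ℝ) : ℂ) * star (B i j) := by
          intro j
          have := hb i hi
          simp only [hM₀def, Matrix.of_apply, this, hvdef]
        have hsd : Real.sqrt (d i) ≠ 0 := by
          simpa [Real.sqrt_eq_zero (hd0 i)] using hi
        calc (∑ j, B i j * M₀ j i)
            = (((Real.sqrt (d i))⁻¹ : ℝ) : ℂ) * ∑ j, B i j * star (B i j) := by
              rw [Finset.mul_sum]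
              exact Finset.sum_congr rfl fun j _ => by rw [hbv j]; ring
          _ = (((Real.sqrt (d i))⁻¹ : ℝ) : ℂ) * (d i : ℂ) := by rw [hrow i]
          _ = ((Real.sqrt (d i) : ℝ) : ℂ) := by
              rw [← Complex.ofReal_mul]
              congr 1
              rw [show d i = Real.sqrt (d i) * Real.sqrt (d i) from
                (Real.mul_self_sqrt (hd0 i)).symm]
              rw [Real.sqrt_mul_self (Real.sqrt_nonneg _)]
              field_simp
    rw [htraceAbs, htr0, Complex.norm_of_nonneg]
    exact Finset.sum_nonneg fun i _ => Real.sqrt_nonneg _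
  · -- upper bound
    rintro r ⟨U, hU, rfl⟩
    have h1 : (U * X).trace = (B * (U * V)).trace := by
      rw [hXVB, show U * (V * B) = (U * V) * B by simp only [Matrix.mul_assoc],
        Matrix.trace_mul_comm]
    rw [h1, htr, htraceAbs]
    calc ‖∑ i, ∑ j, B i j * (U * V) j i‖
        ≤ ∑ i, ‖∑ j, B i j * (U * V) j i‖ := norm_sum_le _ _
      _ ≤ ∑ i, Real.sqrt (d i) :=
          Finset.sum_le_sum fun i _ => habs_row (U * V) (mul_mem hU hVmem) i

/-- Let `ψ, φ` be unit vectors of `H_A ⊗ H_B` (modeled on `Fin dA × Fin dB → ℂ`, with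
inner product `⟨φ, v⟩ = star φ ⬝ᵥ v`).  The maximum of `|⟨φ, (U ⊗ 1_B) ψ⟩|` over all
unitaries `U` on `H_A` equals `tr|X|`, where `X = tr_B |ψ⟩⟨φ|`. -/
theorem stmt18 {dA dB : ℕ} (ψ φ : Fin dA × Fin dB → ℂ)
    (hψ : star ψ ⬝ᵥ ψ = 1) (hφ : star φ ⬝ᵥ φ = 1) :
    IsGreatest
      {r : ℝ | ∃ U ∈ Matrix.unitaryGroup (Fin dA) ℂ,
        r = ‖(star φ ⬝ᵥ ((U ⊗ₖ (1 : Matrix (Fin dB) (Fin dB) ℂ)).mulVec ψ))‖}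
      (traceAbs (ptraceKetBra ψ φ)) := by
  simpa only [inner_eq_trace] using isGreatest_traceAbs (ptraceKetBra ψ φ)
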